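/- arXiv:2306.08519 — 3 statements merged into one kernel-verified Lean document; each statement's English description precedes it below -/
import Mathlib

section
/- The function t ↦ μ(t)/κ(t) is continuous on [0,T]. -/
open MeasureTheory

/-- `a_Σ^{≥j} = Σ_{k=j}^{I} a(k)`. -/
noncomputable def aSig (I : ℕ) (a : ℕ → ℝ) (j : ℕ) : ℝ :=
  ∑ k ∈ Finset.Icc j I, a k

/-- `A(j) = a(j) − a_Σ^{≥j}/(I−j+1)` for `j ≤ I−1`, and `A(I) = a(I) − a_Σ^{≥I−1}/2`. -/
noncomputable def Acoef (I : ℕ) (a : ℕ → ℝ) (j : ℕ) : ℝ :=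
  if j = I then a I - aSig I a (I - 1) / 2
  else a j - aSig I a j / ((I : ℝ) - (j : ℝ) + 1)

/-- The largest index `j ≤ I−2` with `τ(j) ≤ t` (and `0` if none). -/
noncomputable def lastIdx (I : ℕ) (τ : ℕ → ℝ) (t : ℝ) : ℕ :=
  (Finset.filter (fun j => τ j ≤ t) (Finset.range (I - 1))).sup id

/-- The candidate equilibrium stock price drift `μ`, defined piecewise:
for `t ∈ [τ(j), τ(j+1))` (with `0 ≤ j ≤ I−2` the largest index with `τ(j) ≤ t`),
`μ(t) = −κ(t)·(γ(t)·a_Σ^{≥j+1}/(I−j) + Σ_{k=1}^{j} γ(τ(k))·A(k)/(I−k))`, and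
for `t ∈ [τ(I−1), T]`,
`μ(t) = −κ(t)·(γ(t)·a_Σ^{≥I−1}/2 + Σ_{k=1}^{I−2} γ(τ(k))·A(k)/(I−k))`. -/
noncomputable def muDrift (κ γ : ℝ → ℝ) (I : ℕ) (a : ℕ → ℝ) (τ : ℕ → ℝ) (t : ℝ) : ℝ :=
  if t < τ (I - 1) then
    -(κ t) * (γ t * aSig I a (lastIdx I τ t + 1) / ((I : ℝ) - (lastIdx I τ t : ℝ))
      + ∑ k ∈ Finset.Icc 1 (lastIdx I τ t), γ (τ k) * Acoef I a k / ((I : ℝ) - (k : ℝ)))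
  else
    -(κ t) * (γ t * aSig I a (I - 1) / 2
      + ∑ k ∈ Finset.Icc 1 (I - 2), γ (τ k) * Acoef I a k / ((I : ℝ) - (k : ℝ)))

/-!
On the stage `[τ(j), τ(j+1))` the bracket `g_j(t)` in `μ(t) = −κ(t)·g_j(t)` is affine in `γ(t)`.
The definition of `A` makes `a_Σ^{≥j+1}/(I−j)` telescope, so that
`g_j(t) = γ(t)·a_Σ^{≥1}/I − Σ_{1≤k≤j} (γ(t) − γ(τ(k)))·A(k)/(I−k)`.
Writing `γ(min(t, τ(k)))` for `γ(τ(k))` kills exactly the terms with `τ(k) > t`, which turns this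
into one formula valid at every `t`, and that formula is visibly continuous.
-/

open Finset

noncomputable def stageDrift (γ : ℝ → ℝ) (I : ℕ) (a : ℕ → ℝ) (τ : ℕ → ℝ) (j : ℕ) (t : ℝ) : ℝ :=
  γ t * aSig I a (j + 1) / ((I : ℝ) - j) + ∑ k ∈ Icc 1 j, γ (τ k) * Acoef I a k / ((I : ℝ) - k)

noncomputable def driftClosedForm (γ : ℝ → ℝ) (I : ℕ) (a : ℕ → ℝ) (τ : ℕ → ℝ) (t : ℝ) : ℝ :=
  γ t * aSig I a 1 / I - ∑ k ∈ Icc 1 (I - 2), (γ t - γ (min t (τ k))) * Acoef I a k / ((I : ℝ) - k)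

section Telescoping

variable {I : ℕ} (a : ℕ → ℝ)

theorem aSig_eq_add_aSig_succ {m : ℕ} (hm : m ≤ I) : aSig I a m = a m + aSig I a (m + 1) := by
  rw [aSig, ← insert_Icc_add_one_left_eq_Icc hm, sum_insert (by simp)]
  rfl

theorem aSig_succ_div_sub_aSig_succ_succ_div {j : ℕ} (hj : j + 1 < I) :
    aSig I a (j + 1) / ((I : ℝ) - j) - aSig I a (j + 1 + 1) / ((I : ℝ) - (j + 1 : ℕ))
      = Acoef I a (j + 1) / ((I : ℝ) - (j + 1 : ℕ)) := by
  have hgap : (j : ℝ) + 1 < I := by exact_mod_cast hj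
  have hgap₀ : (I : ℝ) - j ≠ 0 := by linarith
  have hgap₁ : (I : ℝ) - (j + 1) ≠ 0 := by linarith
  have hgap₂ : (I : ℝ) - (j + 1) + 1 ≠ 0 := by linarith
  rw [Acoef, if_neg hj.ne, aSig_eq_add_aSig_succ a hj.le]
  push_cast
  field_simp
  ring

theorem aSig_succ_div_eq {j : ℕ} (hj : j + 1 < I) :
    aSig I a (j + 1) / ((I : ℝ) - j)
      = aSig I a 1 / I - ∑ k ∈ Icc 1 j, Acoef I a k / ((I : ℝ) - k) := by
  induction j with
  | zero => simp
  | succ j ih =>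
    rw [sum_Icc_succ_top (by omega), ← aSig_succ_div_sub_aSig_succ_succ_div a (by omega),
      ih (by omega)]
    ring

theorem stageDrift_eq (γ : ℝ → ℝ) (τ : ℕ → ℝ) {j : ℕ} (hj : j + 1 < I) (t : ℝ) :
    stageDrift γ I a τ j t
      = γ t * aSig I a 1 / I - ∑ k ∈ Icc 1 j, (γ t - γ (τ k)) * Acoef I a k / ((I : ℝ) - k) := by
  rw [stageDrift, mul_div_assoc, aSig_succ_div_eq a hj]
  simp only [sub_mul, sub_div, sum_sub_distrib, mul_sub, mul_sum, mul_div_assoc]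
  ring

end Telescoping

theorem driftClosedForm_eq_stageDrift (γ : ℝ → ℝ) {I : ℕ} (a : ℕ → ℝ) (τ : ℕ → ℝ) {L : ℕ}
    (hL : L + 1 < I) {t : ℝ} (hstage : ∀ k ∈ Icc 1 (I - 2), τ k ≤ t ↔ k ≤ L) :
    driftClosedForm γ I a τ t = stageDrift γ I a τ L t := by
  have hterm : ∀ k ∈ Icc 1 (I - 2), (γ t - γ (min t (τ k))) * Acoef I a k / ((I : ℝ) - k)
      = if k ≤ L then (γ t - γ (τ k)) * Acoef I a k / ((I : ℝ) - k) else 0 := by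
    intro k hk
    by_cases hkt : τ k ≤ t
    · rw [min_eq_right hkt, if_pos ((hstage k hk).1 hkt)]
    · rw [min_eq_left (not_le.1 hkt).le, if_neg (mt (hstage k hk).2 hkt), sub_self, zero_mul,
        zero_div]
  have hfilter : (Icc 1 (I - 2)).filter (· ≤ L) = Icc 1 L := by
    ext k
    simp only [mem_filter, mem_Icc]
    omega
  rw [driftClosedForm, stageDrift_eq a γ τ hL, sum_congr rfl hterm, ← sum_filter, hfilter]

theorem tau_le_iff_le_lastIdx {I : ℕ} {τ : ℕ → ℝ} (hτmono : ∀ j k : ℕ, j ≤ k → k ≤ I → τ j ≤ τ k)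
    (t : ℝ) {k : ℕ} (hk : k ∈ Icc 1 (I - 2)) : τ k ≤ t ↔ k ≤ lastIdx I τ t := by
  rw [mem_Icc] at hk
  constructor
  · intro hkt
    exact le_sup (f := id) (mem_filter.2 ⟨mem_range.2 (by omega), hkt⟩)
  · intro hkL
    have hne : ((range (I - 1)).filter (fun j => τ j ≤ t)).Nonempty := by
      by_contra hempty
      rw [not_nonempty_iff_eq_empty] at hempty
      simp only [lastIdx, hempty, sup_empty, bot_eq_zero'] at hkL
      omega
    obtain ⟨L, hLmem, hL⟩ := exists_mem_eq_sup _ hne id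
    rw [lastIdx, hL] at hkL
    obtain ⟨hLrange, hLt⟩ := mem_filter.1 hLmem
    exact (hτmono k L hkL (by have := mem_range.1 hLrange; omega)).trans hLt

theorem lastIdx_le_sub_two (I : ℕ) (τ : ℕ → ℝ) (t : ℝ) : lastIdx I τ t ≤ I - 2 :=
  Finset.sup_le fun k hk => by
    have := mem_range.1 (mem_filter.1 hk).1
    simp only [id_eq]
    omega

theorem muDrift_eq_neg_mul_driftClosedForm (κ γ : ℝ → ℝ) {I : ℕ} (hI : 3 ≤ I) (a : ℕ → ℝ)
    {τ : ℕ → ℝ} (hτmono : ∀ j k : ℕ, j ≤ k → k ≤ I → τ j ≤ τ k) (t : ℝ) :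
    muDrift κ γ I a τ t = -κ t * driftClosedForm γ I a τ t := by
  by_cases ht : t < τ (I - 1)
  · rw [driftClosedForm_eq_stageDrift γ a τ (by have := lastIdx_le_sub_two I τ t; omega)
      fun k hk => tau_le_iff_le_lastIdx hτmono t hk, muDrift, if_pos ht, stageDrift]
  · have hlast : ∀ k ∈ Icc 1 (I - 2), τ k ≤ t ↔ k ≤ I - 2 := fun k hk => by
      rw [mem_Icc] at hk
      exact iff_of_true ((hτmono k (I - 1) (by omega) (by omega)).trans (not_lt.1 ht)) hk.2
    have hcast : ((I - 2 : ℕ) : ℝ) = I - 2 := by rw [Nat.cast_sub (by omega)]; norm_num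
    rw [driftClosedForm_eq_stageDrift γ a τ (by omega) hlast, muDrift, if_neg ht, stageDrift,
      hcast, show I - 2 + 1 = I - 1 by omega]
    norm_num

theorem continuousOn_driftClosedForm {T : ℝ} {γ : ℝ → ℝ} (hγcont : ContinuousOn γ (Set.Icc 0 T))
    (I : ℕ) (a : ℕ → ℝ) {τ : ℕ → ℝ} (hτnn : ∀ k ∈ Icc 1 (I - 2), 0 ≤ τ k) :
    ContinuousOn (driftClosedForm γ I a τ) (Set.Icc 0 T) := by
  have hγmin : ∀ k ∈ Icc 1 (I - 2), ContinuousOn (fun t => γ (min t (τ k))) (Set.Icc 0 T) :=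
    fun k hk => hγcont.comp (continuous_id.min continuous_const).continuousOn
      fun t ht => ⟨le_min ht.1 (hτnn k hk), (min_le_left t _).trans ht.2⟩
  unfold driftClosedForm
  refine ((hγcont.mul continuousOn_const).div_const _).sub (continuousOn_finsetSum _ fun k hk => ?_)
  exact ((hγcont.sub (hγmin k hk)).mul continuousOn_const).div_const _

theorem stmt7_general (T : ℝ) (κ γ : ℝ → ℝ)
    (hκpos : ∀ t ∈ Set.Icc (0 : ℝ) T, 0 < κ t)
    (hγcont : ContinuousOn γ (Set.Icc 0 T))
    (I : ℕ) (hI : 3 ≤ I) (a : ℕ → ℝ) (τ : ℕ → ℝ)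
    (hτ0 : τ 0 = 0) (hτmono : ∀ j k : ℕ, j ≤ k → k ≤ I → τ j ≤ τ k) :
    ContinuousOn (fun t => muDrift κ γ I a τ t / κ t) (Set.Icc 0 T) := by
  have hτnn : ∀ k ∈ Icc 1 (I - 2), 0 ≤ τ k :=
    fun k hk => hτ0 ▸ hτmono 0 k (Nat.zero_le k) (by have := (mem_Icc.1 hk).2; omega)
  refine (continuousOn_driftClosedForm hγcont I a hτnn).neg.congr fun t ht => ?_
  rw [muDrift_eq_neg_mul_driftClosedForm κ γ hI a hτmono, neg_mul, neg_div,
    mul_div_cancel_left₀ _ (hκpos t ht).ne']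
  rfl

/-- the function `t ↦ μ(t)/κ(t)` is continuous on `[0,T]`. -/
theorem stmt7 (T : ℝ) (κ γ : ℝ → ℝ) (hT : 0 < T)
    (hκcont : ContinuousOn κ (Set.Icc 0 T))
    (hκpos : ∀ t ∈ Set.Icc (0 : ℝ) T, 0 < κ t)
    (hγcont : ContinuousOn γ (Set.Icc 0 T))
    (hγmono : StrictMonoOn γ (Set.Icc 0 T))
    (hγ0 : γ 0 = 0) (hγT : γ T = 1)
    (I : ℕ) (hI : 3 ≤ I) (a : ℕ → ℝ) (τ : ℕ → ℝ)
    (hτ0 : τ 0 = 0) (hτmono : ∀ j k : ℕ, j ≤ k → k ≤ I → τ j ≤ τ k)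
    (hτlast : τ (I - 1) = τ I) (hτT : τ (I - 1) < T) :
    ContinuousOn (fun t => muDrift κ γ I a τ t / κ t) (Set.Icc 0 T) :=
  stmt7_general T κ γ hκpos hγcont I hI a τ hτ0 hτmono
end

section
/- For every 1 ≤ j ≤ I and every t ∈ [0,T], one has ∫_t^T κ(u)·( μ(u)/κ(u) + γ(u)·a(j) + θ(j)_{0−} − θ(j)(u) ) du = Y(j)_t. -/
open MeasureTheory

/-- `Γ(j)_t = A(j)·∫_{max(t,τ(j))}^T κ(u)(γ(u) − γ(τ(j))) du`. -/
noncomputable def GamP (T : ℝ) (κ γ : ℝ → ℝ) (I : ℕ) (a : ℕ → ℝ) (τ : ℕ → ℝ)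
    (j : ℕ) (t : ℝ) : ℝ :=
  Acoef I a j * ∫ u in (max t (τ j))..T, κ u * (γ u - γ (τ j))

/-- `Y(j)_t = ((I−j+1)/(I−j))·Γ(j)_t + Σ_{k=j+1}^{I−2} Γ(k)_t/(I−k)` for `1 ≤ j ≤ I−2`,
and `Y(j)_t = Γ(j)_t` for `j ∈ {I−1, I}`. -/
noncomputable def Yproc (T : ℝ) (κ γ : ℝ → ℝ) (I : ℕ) (a : ℕ → ℝ) (τ : ℕ → ℝ)
    (j : ℕ) (t : ℝ) : ℝ :=
  if j ≤ I - 2 then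
    ((I : ℝ) - (j : ℝ) + 1) / ((I : ℝ) - (j : ℝ)) * GamP T κ γ I a τ j t
      + ∑ k ∈ Finset.Icc (j + 1) (I - 2), GamP T κ γ I a τ k t / ((I : ℝ) - (k : ℝ))
  else GamP T κ γ I a τ j t

/-- Agent `(j)`'s candidate optimal trading strategy:
`θ(j)(t) = θ(j)_{0−} + μ(t)/κ(t) + γ(t)·a(j)` for `t ≤ τ(j)`, frozen afterwards. -/
noncomputable def thetaEq (κ γ : ℝ → ℝ) (I : ℕ) (a : ℕ → ℝ) (τ : ℕ → ℝ)
    (θ0 : ℕ → ℝ) (j : ℕ) (t : ℝ) : ℝ :=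
  if t ≤ τ j then θ0 j + muDrift κ γ I a τ t / κ t + γ t * a j
  else θ0 j + muDrift κ γ I a τ (τ j) / κ (τ j) + γ (τ j) * a j

/-! On each interval `[τ(l), τ(l+1))` the ratio `μ/κ` is an affine function of `γ`, and crossing a
stop-trade time `τ(k)` changes it by `A(k)/(I−k) · (γ − γ(τ(k)))`, by the identity
`A(k)/(I−k) = a_Σ^{≥k}/(I−k+1) − a_Σ^{≥k+1}/(I−k)`. Hence after `τ(j)` the integrand is
`κ(u)` times a fixed combination of the functions `(γ(u) − γ(τ(k)))·1_{u > τ(k)}`, whose integrals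
over `[t, T]` are the `Γ(k)_t / A(k)`; before `τ(j)` it vanishes, since there `θ(j)` is given by
the same formula. -/

open Set

variable {I : ℕ} {a : ℕ → ℝ}

lemma aSig_eq_add {j : ℕ} (hj : j ≤ I) : aSig I a j = a j + aSig I a (j + 1) := by
  rw [aSig, ← Finset.add_sum_erase _ a (Finset.mem_Icc.2 ⟨le_rfl, hj⟩), Finset.Icc_erase_left,
    ← Finset.Icc_add_one_left_eq_Ioc]
  rfl

lemma Acoef_of_ne {j : ℕ} (hj : j ≠ I) :
    Acoef I a j = a j - aSig I a j / ((I : ℝ) - (j : ℝ) + 1) := by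
  rw [Acoef, if_neg hj]

lemma Acoef_div_eq_sub {j : ℕ} (hj : j < I) :
    Acoef I a j / ((I : ℝ) - j)
      = aSig I a j / ((I : ℝ) - j + 1) - aSig I a (j + 1) / ((I : ℝ) - j) := by
  have hpos : (0 : ℝ) < (I : ℝ) - j := sub_pos.2 (by exact_mod_cast hj)
  rw [Acoef_of_ne hj.ne, aSig_eq_add hj.le]
  field_simp
  ring

noncomputable def yWeight (I j : ℕ) : ℝ :=
  if j ≤ I - 2 then ((I : ℝ) - j + 1) / ((I : ℝ) - j) else 1

lemma yWeight_mul_Acoef {j : ℕ} (hI : 2 ≤ I) (hj : j ≤ I) :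
    yWeight I j * Acoef I a j
      = a j - aSig I a (min j (I - 2) + 1) / ((I : ℝ) - ↑(min j (I - 2))) := by
  rw [yWeight]
  split_ifs with hjI
  · have hpos : (0 : ℝ) < (I : ℝ) - j := sub_pos.2 (by exact_mod_cast (by omega : j < I))
    rw [min_eq_left hjI, Acoef_of_ne (by omega), aSig_eq_add (by omega)]
    field_simp
    ring
  · have hcast : ((I - 2 : ℕ) : ℝ) = I - 2 := by rw [Nat.cast_sub hI]; norm_num
    rw [min_eq_right (by omega), hcast, show I - 2 + 1 = I - 1 by omega,
      show (I : ℝ) - (I - 2) = 2 by ring, one_mul]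
    rcases (by omega : j = I - 1 ∨ j = I) with rfl | rfl
    · have hcast' : ((I - 1 : ℕ) : ℝ) = I - 1 := by rw [Nat.cast_sub (by omega)]; norm_num
      rw [Acoef_of_ne (by omega), hcast', show (I : ℝ) - (I - 1) + 1 = 2 by ring]
    · rw [Acoef, if_pos rfl]

/-- `μ(t)/κ(t)` for `t ∈ [τ(l), τ(l+1))`, as a function of `x = γ(t)`. -/
noncomputable def muRatio (γ : ℝ → ℝ) (I : ℕ) (a : ℕ → ℝ) (τ : ℕ → ℝ) (l : ℕ) (x : ℝ) : ℝ :=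
  -(x * aSig I a (l + 1) / ((I : ℝ) - l)
    + ∑ k ∈ Finset.Icc 1 l, γ (τ k) * Acoef I a k / ((I : ℝ) - k))

variable {γ : ℝ → ℝ} {τ : ℕ → ℝ}

lemma muRatio_succ {l : ℕ} (hl : l + 1 < I) (x : ℝ) :
    muRatio γ I a τ (l + 1) x
      = muRatio γ I a τ l x + Acoef I a (l + 1) / ((I : ℝ) - ↑(l + 1)) * (x - γ (τ (l + 1))) := by
  have h := Acoef_div_eq_sub (a := a) hl
  have hcast : (I : ℝ) - ↑(l + 1) + 1 = (I : ℝ) - l := by push_cast; ring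
  rw [hcast] at h
  rw [muRatio, muRatio, Finset.sum_Icc_succ_top (by omega)]
  linear_combination (-x) * h

lemma muRatio_eq_add_sum {m l : ℕ} (hml : m ≤ l) (hl : l + 1 < I) (x : ℝ) :
    muRatio γ I a τ l x = muRatio γ I a τ m x
      + ∑ k ∈ Finset.Icc (m + 1) l, Acoef I a k / ((I : ℝ) - k) * (x - γ (τ k)) := by
  induction l, hml using Nat.le_induction with
  | base => simp
  | succ l hml ih =>
    rw [muRatio_succ (by omega : l + 1 < I), ih (by omega), Finset.sum_Icc_succ_top (by omega)]
    ring

lemma muRatio_sub (γ : ℝ → ℝ) (I : ℕ) (a : ℕ → ℝ) (τ : ℕ → ℝ) (m : ℕ) (x y : ℝ) :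
    muRatio γ I a τ m x - muRatio γ I a τ m y
      = -((x - y) * aSig I a (m + 1) / ((I : ℝ) - m)) := by
  rw [muRatio, muRatio]
  ring

lemma lastIdx_le (I : ℕ) (τ : ℕ → ℝ) (u : ℝ) : lastIdx I τ u ≤ I - 2 :=
  Finset.sup_le fun k hk => by
    have := Finset.mem_range.1 (Finset.mem_filter.1 hk).1
    simp only [id]
    omega

lemma le_lastIdx_iff {u : ℝ} {k : ℕ} (hI : 2 ≤ I) (hτ : MonotoneOn τ (Iic (I - 2)))
    (hu : τ 0 ≤ u) (hk : k ≤ I - 2) : k ≤ lastIdx I τ u ↔ τ k ≤ u := by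
  have hmem : ∀ {i}, i ≤ I - 2 → τ i ≤ u → i ∈ (Finset.range (I - 1)).filter (τ · ≤ u) :=
    fun hi hiu => Finset.mem_filter.2 ⟨Finset.mem_range.2 (by omega), hiu⟩
  constructor
  · intro hkl
    obtain ⟨i, hi, hsup⟩ := Finset.exists_mem_eq_sup _ ⟨0, hmem (Nat.zero_le _) hu⟩ id
    have hil : lastIdx I τ u = i := hsup
    rw [hil] at hkl
    exact (hτ hk (hil ▸ lastIdx_le I τ u) hkl).trans (Finset.mem_filter.1 hi).2
  · exact fun hku => Finset.le_sup (f := id) (hmem hk hku)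

lemma muRatio_lastIdx {m : ℕ} {u : ℝ} (hI : 2 ≤ I) (hτ : MonotoneOn τ (Iic (I - 2)))
    (hm : m ≤ I - 2) (hmu : τ m ≤ u) (x : ℝ) :
    muRatio γ I a τ (lastIdx I τ u) x = muRatio γ I a τ m x
      + ∑ k ∈ Finset.Icc (m + 1) (I - 2),
          if τ k ≤ u then Acoef I a k / ((I : ℝ) - k) * (x - γ (τ k)) else 0 := by
  have h0 : τ 0 ≤ u := (hτ (Nat.zero_le _) hm (Nat.zero_le m)).trans hmu
  have hml : m ≤ lastIdx I τ u := (le_lastIdx_iff hI hτ h0 hm).2 hmu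
  have hl := lastIdx_le I τ u
  rw [muRatio_eq_add_sum hml (by omega), ← Finset.sum_filter]
  congr 2
  ext k
  simp only [Finset.mem_Icc, Finset.mem_filter]
  constructor
  · rintro ⟨hmk, hkl⟩
    exact ⟨⟨hmk, hkl.trans hl⟩, (le_lastIdx_iff hI hτ h0 (hkl.trans hl)).1 hkl⟩
  · rintro ⟨⟨hmk, hk⟩, hku⟩
    exact ⟨hmk, (le_lastIdx_iff hI hτ h0 hk).2 hku⟩

lemma muDrift_div_eq {κ : ℝ → ℝ} {u : ℝ} (hI : 2 ≤ I) (hτ : τ (I - 2) ≤ τ (I - 1))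
    (hκ : κ u ≠ 0) :
    muDrift κ γ I a τ u / κ u = muRatio γ I a τ (lastIdx I τ u) (γ u) := by
  rw [muDrift, muRatio]
  split_ifs with hu
  · field_simp
  · have hl : lastIdx I τ u = I - 2 :=
      le_antisymm (lastIdx_le I τ u) <| Finset.le_sup (f := id) <|
        Finset.mem_filter.2 ⟨Finset.mem_range.2 (by omega), hτ.trans (not_lt.1 hu)⟩
    have hcast : ((I - 2 : ℕ) : ℝ) = I - 2 := by rw [Nat.cast_sub hI]; norm_num
    rw [hl, hcast, show I - 2 + 1 = I - 1 by omega, show (I : ℝ) - (I - 2) = 2 by ring]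
    field_simp

noncomputable def stopKernel (κ γ : ℝ → ℝ) (c : ℝ) : ℝ → ℝ :=
  (Ioi c).indicator fun u => κ u * (γ u - γ c)

lemma stopKernel_eq_ite (κ γ : ℝ → ℝ) (c u : ℝ) :
    stopKernel κ γ c u = if c ≤ u then κ u * (γ u - γ c) else 0 := by
  rcases lt_trichotomy c u with h | rfl | h
  · simp [stopKernel, h, h.le]
  · simp [stopKernel]
  · simp [stopKernel, h.le, not_le.2 h]

noncomputable def yDensity (κ γ : ℝ → ℝ) (I : ℕ) (a : ℕ → ℝ) (τ : ℕ → ℝ) (j : ℕ) (u : ℝ) : ℝ :=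
  yWeight I j * (Acoef I a j * stopKernel κ γ (τ j) u)
    + ∑ k ∈ Finset.Icc (j + 1) (I - 2), Acoef I a k * stopKernel κ γ (τ k) u / ((I : ℝ) - k)

lemma integrand_eq_yDensity {κ : ℝ → ℝ} {j : ℕ} {u : ℝ} (θ0 : ℕ → ℝ) (hI : 2 ≤ I)
    (hτ : MonotoneOn τ (Iic I)) (hj : j ≤ I) (hκu : κ u ≠ 0) (hκτ : κ (τ j) ≠ 0) :
    κ u * (muDrift κ γ I a τ u / κ u + γ u * a j + θ0 j - thetaEq κ γ I a τ θ0 j u)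
      = yDensity κ γ I a τ j u := by
  have hτk : ∀ k ∈ Finset.Icc (j + 1) (I - 2), τ j ≤ τ k := fun k hk => by
    have := Finset.mem_Icc.1 hk
    exact hτ hj (show k ≤ I by omega) (by omega)
  by_cases hu : u ≤ τ j
  · have hzero : ∀ k, τ j ≤ τ k → stopKernel κ γ (τ k) u = 0 := fun k hk =>
      indicator_of_notMem (not_lt.2 (hu.trans hk)) _
    rw [thetaEq, if_pos hu, yDensity, hzero j le_rfl,
      Finset.sum_eq_zero fun k hk => by rw [hzero k (hτk k hk)]; ring]
    ring
  · set m := min j (I - 2)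
    have hm : m ≤ I - 2 := min_le_right _ _
    have hmj : τ m ≤ τ j := hτ (show m ≤ I by omega) hj (min_le_left _ _)
    have hIcc : Finset.Icc (m + 1) (I - 2) = Finset.Icc (j + 1) (I - 2) := by
      ext k; simp only [Finset.mem_Icc]; omega
    have hτ' : MonotoneOn τ (Iic (I - 2)) := hτ.mono (Iic_subset_Iic.2 (Nat.sub_le I 2))
    have hτ2 : τ (I - 2) ≤ τ (I - 1) := hτ (show I - 2 ≤ I by omega) (show I - 1 ≤ I by omega)
      (by omega)
    have hμu := (muDrift_div_eq hI hτ2 hκu).trans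
      (muRatio_lastIdx (a := a) hI hτ' hm (hmj.trans (not_le.1 hu).le) (γ u))
    have hμτ := (muDrift_div_eq hI hτ2 hκτ).trans
      (muRatio_lastIdx (a := a) hI hτ' hm hmj (γ (τ j)))
    rw [hIcc, Finset.sum_eq_zero fun k hk => by
      split_ifs with hkj
      · rw [le_antisymm hkj (hτk k hk), sub_self, mul_zero]
      · rfl, add_zero] at hμτ
    have hsum : ∑ k ∈ Finset.Icc (j + 1) (I - 2),
          Acoef I a k * stopKernel κ γ (τ k) u / ((I : ℝ) - k)
        = κ u * ∑ k ∈ Finset.Icc (j + 1) (I - 2),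
            if τ k ≤ u then Acoef I a k / ((I : ℝ) - k) * (γ u - γ (τ k)) else 0 := by
      rw [Finset.mul_sum]
      refine Finset.sum_congr rfl fun k _ => ?_
      rw [stopKernel_eq_ite]
      split_ifs <;> ring
    rw [thetaEq, if_neg hu, yDensity, hsum, stopKernel_eq_ite, if_pos (not_le.1 hu).le, hμu,
      hμτ, hIcc]
    linear_combination κ u * (muRatio_sub γ I a τ m (γ u) (γ (τ j)))
      - κ u * (γ u - γ (τ j)) * yWeight_mul_Acoef (a := a) hI hj

lemma intervalIntegral_indicator_Ioi {E : Type*} [NormedAddCommGroup E] [NormedSpace ℝ E]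
    {f : ℝ → E} {a b c : ℝ} (hab : a ≤ b) (hcb : c ≤ b) :
    ∫ u in a..b, (Ioi c).indicator f u = ∫ u in (max a c)..b, f u := by
  rw [intervalIntegral.integral_of_le hab, intervalIntegral.integral_of_le (max_le hab hcb),
    setIntegral_indicator measurableSet_Ioi, Ioc_inter_Ioi]

variable {κ : ℝ → ℝ} {T t : ℝ}

lemma GamP_eq_integral_stopKernel {k : ℕ} (ht : t ≤ T) (hk : τ k ≤ T) :
    GamP T κ γ I a τ k t = Acoef I a k * ∫ u in t..T, stopKernel κ γ (τ k) u := by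
  rw [GamP, stopKernel, intervalIntegral_indicator_Ioi ht hk]

lemma intervalIntegrable_stopKernel (hκ : ContinuousOn κ (Icc 0 T))
    (hγ : ContinuousOn γ (Icc 0 T)) (h0 : 0 ≤ t) (ht : t ≤ T) (c : ℝ) :
    IntervalIntegrable (stopKernel κ γ c) volume t T := by
  have hcont : ContinuousOn (fun u => κ u * (γ u - γ c)) (Icc t T) :=
    (hκ.mul (hγ.sub continuousOn_const)).mono (Icc_subset_Icc_left h0)
  rw [intervalIntegrable_iff]
  exact (intervalIntegrable_iff.1 (hcont.intervalIntegrable_of_Icc ht)).indicator measurableSet_Ioi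

lemma Yproc_eq (T : ℝ) (κ γ : ℝ → ℝ) (I : ℕ) (a : ℕ → ℝ) (τ : ℕ → ℝ) (j : ℕ) (t : ℝ) :
    Yproc T κ γ I a τ j t = yWeight I j * GamP T κ γ I a τ j t
      + ∑ k ∈ Finset.Icc (j + 1) (I - 2), GamP T κ γ I a τ k t / ((I : ℝ) - k) := by
  rw [Yproc, yWeight]
  split_ifs with hj
  · rfl
  · rw [Finset.Icc_eq_empty (by omega), Finset.sum_empty, one_mul, add_zero]

lemma Yproc_eq_integral_yDensity {j : ℕ} (hκ : ContinuousOn κ (Icc 0 T))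
    (hγ : ContinuousOn γ (Icc 0 T)) (hτT : ∀ k ≤ I, τ k ≤ T) (hj : j ≤ I) (h0 : 0 ≤ t)
    (ht : t ≤ T) :
    Yproc T κ γ I a τ j t = ∫ u in t..T, yDensity κ γ I a τ j u := by
  have hint := intervalIntegrable_stopKernel hκ hγ h0 ht
  have hintk : ∀ k ∈ Finset.Icc (j + 1) (I - 2), IntervalIntegrable
      (fun u => Acoef I a k * stopKernel κ γ (τ k) u / ((I : ℝ) - k)) volume t T :=
    fun k _ => ((hint (τ k)).const_mul _).div_const _
  simp only [yDensity]
  rw [intervalIntegral.integral_add (((hint (τ j)).const_mul _).const_mul _)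
      (by simpa only [Finset.sum_fn] using IntervalIntegrable.sum _ hintk),
    intervalIntegral.integral_finsetSum hintk, Yproc_eq,
    GamP_eq_integral_stopKernel ht (hτT j hj), intervalIntegral.integral_const_mul,
    intervalIntegral.integral_const_mul]
  congr 1
  refine Finset.sum_congr rfl fun k hk => ?_
  rw [intervalIntegral.integral_div, intervalIntegral.integral_const_mul,
    GamP_eq_integral_stopKernel ht (hτT k (by have := Finset.mem_Icc.1 hk; omega))]

theorem stmt11_general (T : ℝ) (κ γ : ℝ → ℝ)
    (hκcont : ContinuousOn κ (Set.Icc 0 T))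
    (hκpos : ∀ t ∈ Set.Icc (0 : ℝ) T, 0 < κ t)
    (hγcont : ContinuousOn γ (Set.Icc 0 T))
    (I : ℕ) (hI : 3 ≤ I) (a : ℕ → ℝ) (τ : ℕ → ℝ)
    (hτ0 : τ 0 = 0) (hτmono : ∀ j k : ℕ, j ≤ k → k ≤ I → τ j ≤ τ k)
    (hτlast : τ (I - 1) = τ I) (hτT : τ (I - 1) < T)
    (θ0 : ℕ → ℝ) :
    ∀ j : ℕ, 1 ≤ j → j ≤ I → ∀ t ∈ Set.Icc (0 : ℝ) T,
      (∫ u in t..T, κ u * (muDrift κ γ I a τ u / κ u + γ u * a j + θ0 j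
          - thetaEq κ γ I a τ θ0 j u))
        = Yproc T κ γ I a τ j t := by
  intro j _ hj t ⟨ht0, htT⟩
  have hτ : MonotoneOn τ (Iic I) := fun i _ k hk hik => hτmono i k hik hk
  have hτ_le_T : ∀ k ≤ I, τ k ≤ T := fun k hk => (hτmono k I hk le_rfl).trans (hτlast ▸ hτT.le)
  have hτj : τ j ∈ Icc 0 T := ⟨hτ0 ▸ hτmono 0 j j.zero_le hj, hτ_le_T j hj⟩
  rw [Yproc_eq_integral_yDensity hκcont hγcont hτ_le_T hj ht0 htT]
  refine intervalIntegral.integral_congr fun u hu => ?_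
  rw [uIcc_of_le htT] at hu
  exact integrand_eq_yDensity θ0 (by omega) hτ hj (hκpos u ⟨ht0.trans hu.1, hu.2⟩).ne'
    (hκpos _ hτj).ne'

/-- for every `1 ≤ j ≤ I` and `t ∈ [0,T]`,
`∫_t^T κ(u)·(μ(u)/κ(u) + γ(u)·a(j) + θ(j)_{0−} − θ(j)(u)) du = Y(j)_t`. -/
theorem stmt11 (T : ℝ) (κ γ : ℝ → ℝ) (hT : 0 < T)
    (hκcont : ContinuousOn κ (Set.Icc 0 T))
    (hκpos : ∀ t ∈ Set.Icc (0 : ℝ) T, 0 < κ t)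
    (hγcont : ContinuousOn γ (Set.Icc 0 T))
    (hγmono : StrictMonoOn γ (Set.Icc 0 T))
    (hγ0 : γ 0 = 0) (hγT : γ T = 1)
    (I : ℕ) (hI : 3 ≤ I) (a : ℕ → ℝ) (τ : ℕ → ℝ)
    (hτ0 : τ 0 = 0) (hτmono : ∀ j k : ℕ, j ≤ k → k ≤ I → τ j ≤ τ k)
    (hτlast : τ (I - 1) = τ I) (hτT : τ (I - 1) < T)
    (θ0 : ℕ → ℝ) :
    ∀ j : ℕ, 1 ≤ j → j ≤ I → ∀ t ∈ Set.Icc (0 : ℝ) T,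
      (∫ u in t..T, κ u * (muDrift κ γ I a τ u / κ u + γ u * a j + θ0 j
          - thetaEq κ γ I a τ θ0 j u))
        = Yproc T κ γ I a τ j t :=
  stmt11_general T κ γ hκcont hκpos hγcont I hI a τ hτ0 hτmono hτlast hτT θ0
end

section
/- Let λ > 0 and 1 ≤ j ≤ I−2. Assume τ(j) > 0, |Y(k)_t| ≤ λ for every t ∈ [0,T] and every j+1 ≤ k ≤ I−2, |Y(j)_{τ(j)}| = λ, and A(j) ≥ 0. Then: (i) Y(j)_t = λ for every t ∈ [0, τ(j)]; and (ii) if moreover for each 1 ≤ i ≤ j−1 there exists t ∈ [0, τ(j)] such that |((I−j+1)/(I−j))·( a(i) − (a(i) + a_Σ^{≥j+1})/(I−j+1) )·F(t) + Σ_{k=j+1}^{I−2} (A(k)/(I−k))·F(max(t, τ(k)))| ≤ λ, then a(j) ≥ a(i) for every 1 ≤ i ≤ j−1. The symmetric statement holds when A(j) ≤ 0, with conclusions Y(j)_t = −λ on [0, τ(j)] and a(j) ≤ a(i). -/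
open MeasureTheory

/-- `F(t) = ∫_t^T κ(u)(γ(u) − γ(t)) du`. -/
noncomputable def Ffun (T : ℝ) (κ γ : ℝ → ℝ) (t : ℝ) : ℝ :=
  ∫ u in t..T, κ u * (γ u - γ t)

/-!
On `[0, τ(j)]` no Γ(k) with `k ≥ j` has started to move, so `Y(j)` is constant there, equal to
`c·A(j)·F(τ(j)) + S(j+1)` with `c = (I−j+1)/(I−j)` and the tail sum
`S(k) = Σ_{m=k}^{I−2} A(m)F(τ(m))/(I−m)`. At the stop-trade times one has
`Y(k)_{τ(k)} = (I−k+1)S(k) − (I−k)S(k+1)`, so the bounds `Y(k) ≥ −λ` propagate `S(k) ≤ −λ` from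
`k = j+1` up to `S(I−1) = 0`. Hence if `A(j) ≥ 0`, `Y(j)_{τ(j)} = −λ` is impossible, which
gives (i).
For (ii), replacing `a(j)` by `a(i)` changes `c·A(j)` by exactly `a(i) − a(j)`; comparing with
`Y(j) = λ` and using that `F` is positive and decreasing on `[0, τ(j)]` forces `a(i) ≤ a(j)`.
The case `A(j) ≤ 0` is the case `A(j) ≥ 0` for `−a`.
-/

section Ffun

variable {T : ℝ} {κ γ : ℝ → ℝ}

lemma intervalIntegrable_kernel (hκ : ContinuousOn κ (Set.Icc 0 T))
    (hγ : ContinuousOn γ (Set.Icc 0 T)) {s t : ℝ} (hs : 0 ≤ s) (hst : s ≤ t) (ht : t ≤ T)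
    (c : ℝ) : IntervalIntegrable (fun u => κ u * (γ u - c)) volume s t := by
  have hsub : Set.uIcc s t ⊆ Set.Icc 0 T := by
    rw [Set.uIcc_of_le hst]
    exact Set.Icc_subset_Icc hs ht
  exact ((hκ.mono hsub).mul ((hγ.mono hsub).sub continuousOn_const)).intervalIntegrable

lemma Ffun_pos (hκ : ContinuousOn κ (Set.Icc 0 T)) (hκpos : ∀ t ∈ Set.Icc 0 T, 0 < κ t)
    (hγ : ContinuousOn γ (Set.Icc 0 T)) (hγmono : StrictMonoOn γ (Set.Icc 0 T))
    {s : ℝ} (hs : 0 ≤ s) (hsT : s < T) : 0 < Ffun T κ γ s := by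
  refine intervalIntegral.intervalIntegral_pos_of_pos_on
    (intervalIntegrable_kernel hκ hγ hs hsT.le le_rfl _) (fun u hu => ?_) hsT
  have hu' : u ∈ Set.Icc 0 T := ⟨hs.trans hu.1.le, hu.2.le⟩
  exact mul_pos (hκpos u hu') (sub_pos.2 (hγmono ⟨hs, hsT.le⟩ hu' hu.1))

lemma Ffun_antitoneOn (hκ : ContinuousOn κ (Set.Icc 0 T)) (hκnn : ∀ t ∈ Set.Icc 0 T, 0 ≤ κ t)
    (hγ : ContinuousOn γ (Set.Icc 0 T)) (hγmono : MonotoneOn γ (Set.Icc 0 T)) :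
    AntitoneOn (Ffun T κ γ) (Set.Icc 0 T) := by
  intro s hs t ht hst
  have hsplit : Ffun T κ γ s
      = (∫ u in s..t, κ u * (γ u - γ s)) + ∫ u in t..T, κ u * (γ u - γ s) :=
    (intervalIntegral.integral_add_adjacent_intervals
      (intervalIntegrable_kernel hκ hγ hs.1 hst ht.2 _)
      (intervalIntegrable_kernel hκ hγ ht.1 ht.2 le_rfl _)).symm
  have hhead : 0 ≤ ∫ u in s..t, κ u * (γ u - γ s) := by
    refine intervalIntegral.integral_nonneg hst fun u hu => ?_
    have hu' : u ∈ Set.Icc 0 T := ⟨hs.1.trans hu.1, hu.2.trans ht.2⟩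
    exact mul_nonneg (hκnn u hu') (sub_nonneg.2 (hγmono hs hu' hu.1))
  have htail : Ffun T κ γ t ≤ ∫ u in t..T, κ u * (γ u - γ s) := by
    refine intervalIntegral.integral_mono_on ht.2
      (intervalIntegrable_kernel hκ hγ ht.1 ht.2 le_rfl _)
      (intervalIntegrable_kernel hκ hγ ht.1 ht.2 le_rfl _) fun u hu => ?_
    have hu' : u ∈ Set.Icc 0 T := ⟨ht.1.trans hu.1, hu.2⟩
    exact mul_le_mul_of_nonneg_left (by linarith [hγmono hs ht hst]) (hκnn u hu')
  linarith

end Ffun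

lemma le_of_weighted_recurrence {S w : ℕ → ℝ} {c : ℝ} {m n : ℕ} (hmn : m ≤ n)
    (hw : ∀ k, m ≤ k → k < n → 0 < w k)
    (hstep : ∀ k, m ≤ k → k < n → c ≤ (w k + 1) * S k - w k * S (k + 1))
    (hm : S m ≤ c) : S n ≤ c := by
  induction n, hmn using Nat.le_induction with
  | base => exact hm
  | succ k hmk ih =>
    have hSk := ih (fun l hl hlk => hw l hl (by omega)) (fun l hl hlk => hstep l hl (by omega))
    have hwk := hw k hmk k.lt_succ_self
    have := hstep k hmk k.lt_succ_self
    nlinarith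

section Stopped

variable (T : ℝ) (κ γ : ℝ → ℝ) (I : ℕ) (a : ℕ → ℝ) (τ : ℕ → ℝ)

/-- The value on `[0, τ(k)]` of the tail `Σ_{m=k}^{I−2} Γ(m)_t/(I−m)` of `Y`. -/
noncomputable def tailSum (k : ℕ) : ℝ :=
  ∑ m ∈ Finset.Icc k (I - 2), Acoef I a m * Ffun T κ γ (τ m) / ((I : ℝ) - (m : ℝ))

/-- The value of `Y(j)_t` with `a(j)` replaced by `a(i)` and `τ(j)` by `t`. -/
noncomputable def YprocSwap (j i : ℕ) (t : ℝ) : ℝ :=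
  ((I : ℝ) - (j : ℝ) + 1) / ((I : ℝ) - (j : ℝ))
      * (a i - (a i + aSig I a (j + 1)) / ((I : ℝ) - (j : ℝ) + 1)) * Ffun T κ γ t
    + ∑ k ∈ Finset.Icc (j + 1) (I - 2), Acoef I a k / ((I : ℝ) - (k : ℝ)) * Ffun T κ γ (max t (τ k))

variable {T κ γ I a τ}

lemma tailSum_eq_add {k : ℕ} (hk : k ≤ I - 2) :
    tailSum T κ γ I a τ k
      = Acoef I a k * Ffun T κ γ (τ k) / ((I : ℝ) - (k : ℝ)) + tailSum T κ γ I a τ (k + 1) := by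
  rw [tailSum, tailSum, Finset.Icc_add_one_left_eq_Ioc,
    ← Finset.add_sum_Ioc_eq_sum_Icc hk]

lemma tailSum_eq_zero {k : ℕ} (hk : I - 2 < k) : tailSum T κ γ I a τ k = 0 :=
  Finset.sum_eq_zero fun m hm => by simp at hm; omega

lemma GamP_of_le {m : ℕ} {t : ℝ} (ht : t ≤ τ m) :
    GamP T κ γ I a τ m t = Acoef I a m * Ffun T κ γ (τ m) := by
  rw [GamP, max_eq_right ht, Ffun]

lemma Yproc_of_le (hτmono : ∀ j k : ℕ, j ≤ k → k ≤ I → τ j ≤ τ k) {k : ℕ} (hk : k ≤ I - 2)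
    {t : ℝ} (ht : t ≤ τ k) :
    Yproc T κ γ I a τ k t
      = ((I : ℝ) - (k : ℝ) + 1) / ((I : ℝ) - (k : ℝ)) * (Acoef I a k * Ffun T κ γ (τ k))
        + tailSum T κ γ I a τ (k + 1) := by
  rw [Yproc, if_pos hk, GamP_of_le ht, tailSum]
  refine congrArg _ (Finset.sum_congr rfl fun m hm => ?_)
  rw [Finset.mem_Icc] at hm
  rw [GamP_of_le (ht.trans (hτmono k m (by omega) (by omega)))]

lemma Yproc_eq_of_le (hτmono : ∀ j k : ℕ, j ≤ k → k ≤ I → τ j ≤ τ k) {k : ℕ} (hk : k ≤ I - 2)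
    {t : ℝ} (ht : t ≤ τ k) : Yproc T κ γ I a τ k t = Yproc T κ γ I a τ k (τ k) := by
  rw [Yproc_of_le hτmono hk ht, Yproc_of_le hτmono hk le_rfl]

lemma Yproc_tau_eq_tailSum (hτmono : ∀ j k : ℕ, j ≤ k → k ≤ I → τ j ≤ τ k) {k : ℕ}
    (hk : k + 2 ≤ I) :
    Yproc T κ γ I a τ k (τ k)
      = ((I : ℝ) - k + 1) * tailSum T κ γ I a τ k
        - ((I : ℝ) - k) * tailSum T κ γ I a τ (k + 1) := by
  have hIk : (I : ℝ) - k ≠ 0 := sub_ne_zero.2 (by norm_cast; omega)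
  rw [Yproc_of_le hτmono (by omega) le_rfl, tailSum_eq_add (k := k) (by omega)]
  field_simp
  ring

lemma Acoef_eq_of_lt {j : ℕ} (hj : j < I) :
    Acoef I a j = a j - (a j + aSig I a (j + 1)) / ((I : ℝ) - (j : ℝ) + 1) := by
  rw [Acoef, if_neg hj.ne, aSig, aSig, Finset.Icc_add_one_left_eq_Ioc,
    Finset.add_sum_Ioc_eq_sum_Icc hj.le]

lemma YprocSwap_of_le (hτmono : ∀ j k : ℕ, j ≤ k → k ≤ I → τ j ≤ τ k) {j i : ℕ}
    {t : ℝ} (ht : t ≤ τ j) :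
    YprocSwap T κ γ I a τ j i t
      = ((I : ℝ) - (j : ℝ) + 1) / ((I : ℝ) - (j : ℝ))
          * (a i - (a i + aSig I a (j + 1)) / ((I : ℝ) - (j : ℝ) + 1)) * Ffun T κ γ t
        + tailSum T κ γ I a τ (j + 1) := by
  rw [YprocSwap, tailSum]
  refine congrArg _ (Finset.sum_congr rfl fun m hm => ?_)
  rw [Finset.mem_Icc] at hm
  rw [max_eq_right (ht.trans (hτmono j m (by omega) (by omega))), div_mul_eq_mul_div]

end Stopped

lemma tau_lt_of_le {T : ℝ} {I : ℕ} {τ : ℕ → ℝ} (hτmono : ∀ j k : ℕ, j ≤ k → k ≤ I → τ j ≤ τ k)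
    (hτT : τ (I - 1) < T) {k : ℕ} (hk : k ≤ I - 1) : τ k < T :=
  (hτmono k (I - 1) hk (by omega)).trans_lt hτT

section Stmt19

variable {T : ℝ} {κ γ : ℝ → ℝ} {I : ℕ} {a τ : ℕ → ℝ} {lam : ℝ} {j : ℕ}
  (hκ : ContinuousOn κ (Set.Icc 0 T)) (hκpos : ∀ t ∈ Set.Icc (0 : ℝ) T, 0 < κ t)
  (hγ : ContinuousOn γ (Set.Icc 0 T)) (hγmono : StrictMonoOn γ (Set.Icc 0 T))
  (hτmono : ∀ j k : ℕ, j ≤ k → k ≤ I → τ j ≤ τ k) (hτT : τ (I - 1) < T) (hj : j + 2 ≤ I)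

include hκ hκpos hγ hγmono hτmono hτT hj in
lemma Yproc_tau_eq_of_Acoef_nonneg (hlam : 0 < lam) (hτj : 0 ≤ τ j)
    (hYb : ∀ t ∈ Set.Icc (0 : ℝ) T, ∀ k : ℕ, j + 1 ≤ k → k ≤ I - 2 →
      |Yproc T κ γ I a τ k t| ≤ lam)
    (hYeq : |Yproc T κ γ I a τ j (τ j)| = lam) (hA : 0 ≤ Acoef I a j) :
    Yproc T κ γ I a τ j (τ j) = lam := by
  refine ((abs_eq hlam.le).1 hYeq).resolve_right fun hneg => ?_
  have hF : 0 ≤ Ffun T κ γ (τ j) :=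
    (Ffun_pos hκ hκpos hγ hγmono hτj (tau_lt_of_le hτmono hτT (by omega))).le
  have hc : (0 : ℝ) ≤ ((I : ℝ) - j + 1) / ((I : ℝ) - j) := by
    have : (j : ℝ) + 2 ≤ I := by exact_mod_cast hj
    exact div_nonneg (by linarith) (by linarith)
  have hstart : tailSum T κ γ I a τ (j + 1) ≤ -lam := by
    rw [Yproc_of_le hτmono (by omega) le_rfl] at hneg
    nlinarith [mul_nonneg hc (mul_nonneg hA hF)]
  have hstep : ∀ k, j + 1 ≤ k → k < I - 1 → -lam ≤
      ((I : ℝ) - k + 1) * tailSum T κ γ I a τ k - ((I : ℝ) - k) * tailSum T κ γ I a τ (k + 1) := by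
    intro k hk1 hk2
    have hτk : τ k ∈ Set.Icc 0 T :=
      ⟨hτj.trans (hτmono j k (by omega) (by omega)), (tau_lt_of_le hτmono hτT (by omega)).le⟩
    rw [← Yproc_tau_eq_tailSum hτmono (by omega)]
    exact (abs_le.1 (hYb (τ k) hτk k hk1 (by omega))).1
  -- `S(I−1) = 0`, yet the bounds `Y(k) ≥ −λ` carry `S(k) ≤ −λ` all the way up to `k = I − 1`.
  have hend := le_of_weighted_recurrence (w := fun k => (I : ℝ) - k) (n := I - 1) (by omega)
    (fun k _ hk => sub_pos.2 (by exact_mod_cast (by omega : k < I))) hstep hstart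
  rw [tailSum_eq_zero (by omega)] at hend
  linarith

include hκ hκpos hγ hγmono hτmono hτT hj in
lemma le_of_abs_YprocSwap_le (hA : 0 ≤ Acoef I a j) (hYj : Yproc T κ γ I a τ j (τ j) = lam)
    {i : ℕ} {t : ℝ} (ht : t ∈ Set.Icc 0 (τ j)) (hswap : |YprocSwap T κ γ I a τ j i t| ≤ lam) :
    a i ≤ a j := by
  have hτjT : τ j < T := tau_lt_of_le hτmono hτT (by omega)
  have hFt : 0 < Ffun T κ γ t := Ffun_pos hκ hκpos hγ hγmono ht.1 (ht.2.trans_lt hτjT)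
  have hFle : Ffun T κ γ (τ j) ≤ Ffun T κ γ t :=
    Ffun_antitoneOn hκ (fun u hu => (hκpos u hu).le) hγ hγmono.monotoneOn
      ⟨ht.1, ht.2.trans hτjT.le⟩ ⟨ht.1.trans ht.2, hτjT.le⟩ ht.2
  have hIj : (j : ℝ) + 2 ≤ I := by exact_mod_cast hj
  have hc : (0 : ℝ) ≤ ((I : ℝ) - j + 1) / ((I : ℝ) - j) := div_nonneg (by linarith) (by linarith)
  have hcoef : ((I : ℝ) - j + 1) / ((I : ℝ) - j)
        * (a i - (a i + aSig I a (j + 1)) / ((I : ℝ) - j + 1))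
      = (a i - a j) + ((I : ℝ) - j + 1) / ((I : ℝ) - j) * Acoef I a j := by
    have h1 : (I : ℝ) - j ≠ 0 := by linarith
    have h2 : (I : ℝ) - j + 1 ≠ 0 := by linarith
    rw [Acoef_eq_of_lt (by omega)]
    field_simp
    ring
  rw [Yproc_of_le hτmono (by omega) le_rfl] at hYj
  rw [YprocSwap_of_le hτmono ht.2, hcoef] at hswap
  nlinarith [(abs_le.1 hswap).2, mul_nonneg (mul_nonneg hc hA) (sub_nonneg.2 hFle)]

include hκ hκpos hγ hγmono hτmono hτT hj in
lemma Yproc_eq_and_le_of_Acoef_nonneg (hlam : 0 < lam) (hτj : 0 ≤ τ j)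
    (hYb : ∀ t ∈ Set.Icc (0 : ℝ) T, ∀ k : ℕ, j + 1 ≤ k → k ≤ I - 2 →
      |Yproc T κ γ I a τ k t| ≤ lam)
    (hYeq : |Yproc T κ γ I a τ j (τ j)| = lam) (hA : 0 ≤ Acoef I a j) :
    (∀ t ∈ Set.Icc 0 (τ j), Yproc T κ γ I a τ j t = lam) ∧
      ((∀ i : ℕ, 1 ≤ i → i ≤ j - 1 → ∃ t ∈ Set.Icc 0 (τ j),
          |YprocSwap T κ γ I a τ j i t| ≤ lam) →
        ∀ i : ℕ, 1 ≤ i → i ≤ j - 1 → a i ≤ a j) := by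
  have hYj := Yproc_tau_eq_of_Acoef_nonneg hκ hκpos hγ hγmono hτmono hτT hj hlam hτj hYb hYeq hA
  refine ⟨fun t ht => ?_, fun hswap i hi1 hi2 => ?_⟩
  · rw [Yproc_eq_of_le hτmono (by omega) ht.2, hYj]
  · obtain ⟨t, ht, hti⟩ := hswap i hi1 hi2
    exact le_of_abs_YprocSwap_le hκ hκpos hγ hγmono hτmono hτT hj hA hYj ht hti

end Stmt19

section Neg

variable (T : ℝ) (κ γ : ℝ → ℝ) (I : ℕ) (a τ : ℕ → ℝ)

lemma aSig_neg (j : ℕ) : aSig I (-a) j = -aSig I a j := by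
  simp [aSig]

lemma Acoef_neg (j : ℕ) : Acoef I (-a) j = -Acoef I a j := by
  unfold Acoef
  rw [aSig_neg, aSig_neg]
  split_ifs <;> simp only [Pi.neg_apply] <;> ring

lemma GamP_neg (j : ℕ) (t : ℝ) : GamP T κ γ I (-a) τ j t = -GamP T κ γ I a τ j t := by
  rw [GamP, GamP, Acoef_neg, neg_mul]

lemma Yproc_neg (j : ℕ) (t : ℝ) : Yproc T κ γ I (-a) τ j t = -Yproc T κ γ I a τ j t := by
  unfold Yproc
  split_ifs
  · simp only [GamP_neg, neg_div, Finset.sum_neg_distrib]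
    ring
  · rw [GamP_neg]

lemma YprocSwap_neg (j i : ℕ) (t : ℝ) :
    YprocSwap T κ γ I (-a) τ j i t = -YprocSwap T κ γ I a τ j i t := by
  simp only [YprocSwap, Acoef_neg, aSig_neg, Pi.neg_apply, neg_div, neg_mul,
    Finset.sum_neg_distrib]
  ring

end Neg

theorem stmt19_general (T : ℝ) (κ γ : ℝ → ℝ)
    (hκcont : ContinuousOn κ (Set.Icc 0 T))
    (hκpos : ∀ t ∈ Set.Icc (0 : ℝ) T, 0 < κ t)
    (hγcont : ContinuousOn γ (Set.Icc 0 T))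
    (hγmono : StrictMonoOn γ (Set.Icc 0 T))
    (I : ℕ) (hI : 3 ≤ I) (a : ℕ → ℝ) (τ : ℕ → ℝ)
    (hτmono : ∀ j k : ℕ, j ≤ k → k ≤ I → τ j ≤ τ k)
    (hτT : τ (I - 1) < T)
    (lam : ℝ) (hlam : 0 < lam) (j : ℕ) (hj2 : j ≤ I - 2)
    (hτj : 0 < τ j)
    (hYb : ∀ t ∈ Set.Icc (0 : ℝ) T, ∀ k : ℕ, j + 1 ≤ k → k ≤ I - 2 →
      |Yproc T κ γ I a τ k t| ≤ lam)
    (hYeq : |Yproc T κ γ I a τ j (τ j)| = lam) :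
    (0 ≤ Acoef I a j →
      (∀ t ∈ Set.Icc 0 (τ j), Yproc T κ γ I a τ j t = lam) ∧
      ((∀ i : ℕ, 1 ≤ i → i ≤ j - 1 → ∃ t ∈ Set.Icc 0 (τ j),
          |((I : ℝ) - (j : ℝ) + 1) / ((I : ℝ) - (j : ℝ))
              * (a i - (a i + aSig I a (j + 1)) / ((I : ℝ) - (j : ℝ) + 1)) * Ffun T κ γ t
            + ∑ k ∈ Finset.Icc (j + 1) (I - 2),
                Acoef I a k / ((I : ℝ) - (k : ℝ)) * Ffun T κ γ (max t (τ k))| ≤ lam) →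
        ∀ i : ℕ, 1 ≤ i → i ≤ j - 1 → a i ≤ a j)) ∧
    (Acoef I a j ≤ 0 →
      (∀ t ∈ Set.Icc 0 (τ j), Yproc T κ γ I a τ j t = -lam) ∧
      ((∀ i : ℕ, 1 ≤ i → i ≤ j - 1 → ∃ t ∈ Set.Icc 0 (τ j),
          |((I : ℝ) - (j : ℝ) + 1) / ((I : ℝ) - (j : ℝ))
              * (a i - (a i + aSig I a (j + 1)) / ((I : ℝ) - (j : ℝ) + 1)) * Ffun T κ γ t
            + ∑ k ∈ Finset.Icc (j + 1) (I - 2),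
                Acoef I a k / ((I : ℝ) - (k : ℝ)) * Ffun T κ γ (max t (τ k))| ≤ lam) →
        ∀ i : ℕ, 1 ≤ i → i ≤ j - 1 → a j ≤ a i)) := by
  have hj : j + 2 ≤ I := by omega
  refine ⟨Yproc_eq_and_le_of_Acoef_nonneg hκcont hκpos hγcont hγmono hτmono hτT hj hlam hτj.le
    hYb hYeq, fun hA => ?_⟩
  obtain ⟨hconst, hle⟩ := Yproc_eq_and_le_of_Acoef_nonneg (a := -a) hκcont hκpos hγcont hγmono
    hτmono hτT hj hlam hτj.le
    (fun t ht k hk1 hk2 => by simpa only [Yproc_neg, abs_neg] using hYb t ht k hk1 hk2)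
    (by rwa [Yproc_neg, abs_neg]) (by rw [Acoef_neg]; linarith)
  refine ⟨fun t ht => ?_, fun hswap i hi1 hi2 => ?_⟩
  · linarith [Yproc_neg T κ γ I a τ j t ▸ hconst t ht]
  · refine neg_le_neg_iff.1 (hle (fun i hi1 hi2 => ?_) i hi1 hi2)
    simp only [YprocSwap_neg, abs_neg]
    exact hswap i hi1 hi2

/-- let `λ > 0` and `1 ≤ j ≤ I−2`, with `τ(j) > 0`, `|Y(k)_t| ≤ λ` for all
`t ∈ [0,T]` and `j+1 ≤ k ≤ I−2`, and `|Y(j)_{τ(j)}| = λ`.  If `A(j) ≥ 0` then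
`Y(j) ≡ λ` on `[0,τ(j)]`, and (under the stated maximality-type hypothesis) `a(j) ≥ a(i)`
for all `1 ≤ i ≤ j−1`; symmetrically if `A(j) ≤ 0`. -/
theorem stmt19 (T : ℝ) (κ γ : ℝ → ℝ) (hT : 0 < T)
    (hκcont : ContinuousOn κ (Set.Icc 0 T))
    (hκpos : ∀ t ∈ Set.Icc (0 : ℝ) T, 0 < κ t)
    (hγcont : ContinuousOn γ (Set.Icc 0 T))
    (hγmono : StrictMonoOn γ (Set.Icc 0 T))
    (hγ0 : γ 0 = 0) (hγT : γ T = 1)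
    (I : ℕ) (hI : 3 ≤ I) (a : ℕ → ℝ) (τ : ℕ → ℝ)
    (hτ0 : τ 0 = 0) (hτmono : ∀ j k : ℕ, j ≤ k → k ≤ I → τ j ≤ τ k)
    (hτlast : τ (I - 1) = τ I) (hτT : τ (I - 1) < T)
    (lam : ℝ) (hlam : 0 < lam) (j : ℕ) (hj1 : 1 ≤ j) (hj2 : j ≤ I - 2)
    (hτj : 0 < τ j)
    (hYb : ∀ t ∈ Set.Icc (0 : ℝ) T, ∀ k : ℕ, j + 1 ≤ k → k ≤ I - 2 →
      |Yproc T κ γ I a τ k t| ≤ lam)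
    (hYeq : |Yproc T κ γ I a τ j (τ j)| = lam) :
    (0 ≤ Acoef I a j →
      (∀ t ∈ Set.Icc 0 (τ j), Yproc T κ γ I a τ j t = lam) ∧
      ((∀ i : ℕ, 1 ≤ i → i ≤ j - 1 → ∃ t ∈ Set.Icc 0 (τ j),
          |((I : ℝ) - (j : ℝ) + 1) / ((I : ℝ) - (j : ℝ))
              * (a i - (a i + aSig I a (j + 1)) / ((I : ℝ) - (j : ℝ) + 1)) * Ffun T κ γ t
            + ∑ k ∈ Finset.Icc (j + 1) (I - 2),
                Acoef I a k / ((I : ℝ) - (k : ℝ)) * Ffun T κ γ (max t (τ k))| ≤ lam) →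
        ∀ i : ℕ, 1 ≤ i → i ≤ j - 1 → a i ≤ a j)) ∧
    (Acoef I a j ≤ 0 →
      (∀ t ∈ Set.Icc 0 (τ j), Yproc T κ γ I a τ j t = -lam) ∧
      ((∀ i : ℕ, 1 ≤ i → i ≤ j - 1 → ∃ t ∈ Set.Icc 0 (τ j),
          |((I : ℝ) - (j : ℝ) + 1) / ((I : ℝ) - (j : ℝ))
              * (a i - (a i + aSig I a (j + 1)) / ((I : ℝ) - (j : ℝ) + 1)) * Ffun T κ γ t
            + ∑ k ∈ Finset.Icc (j + 1) (I - 2),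
                Acoef I a k / ((I : ℝ) - (k : ℝ)) * Ffun T κ γ (max t (τ k))| ≤ lam) →
        ∀ i : ℕ, 1 ≤ i → i ≤ j - 1 → a j ≤ a i)) :=
  stmt19_general T κ γ hκcont hκpos hγcont hγmono I hI a τ hτmono hτT lam hlam j hj2 hτj hYb hYeq
end
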